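/- Let Σ_5 be the rank-6 lattice with basis A, E1, ..., E5 and Gram matrix [[0,1,0,0,0,0],[1,-2,0,0,0,0],[0,0,-2,0,0,0],[0,0,0,-2,0,0],[0,0,0,0,-2,0],[0,0,0,0,0,-2]]. Then the map σ sending B ↦ 12A + 6E1 - 4E2 - 3E3 - 2E4 - E5, C1 ↦ A - E2, C2 ↦ -E1, C3 ↦ A - E3 defines a primitive embedding of the rank-4 lattice Λ with Gram matrix [[12,-2,0,0],[-2,-2,-1,0],[0,-1,-2,-1],[0,0,-1,-2]] (in basis B, C1, C2, C3) into Σ_5. -/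

import Mathlib

/-- The bilinear form of the rank-6 lattice `Σ₅` with Gram matrix
`[[0,1],[1,-2]] ⊕ ⟨-2⟩⁴` in the basis `A, E1, ..., E5`. -/
def form6 (u v : Fin 6 → ℤ) : ℤ :=
  u 0 * v 1 + u 1 * v 0 -
    2 * (u 1 * v 1 + u 2 * v 2 + u 3 * v 3 + u 4 * v 4 + u 5 * v 5)

/-- The Gram matrix of Nikulin's rank-4 lattice in the basis `B, C1, C2, C3`. -/
def gram17 : Matrix (Fin 4) (Fin 4) ℤ :=
  !![12, -2, 0, 0; -2, -2, -1, 0; 0, -1, -2, -1; 0, 0, -1, -2]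

/-- The map `B ↦ 12A + 6E1 - 4E2 - 3E3 - 2E4 - E5`, `C1 ↦ A - E2`, `C2 ↦ -E1`,
`C3 ↦ A - E3`. -/
def sigma17 (x : Fin 4 → ℤ) : Fin 6 → ℤ :=
  x 0 • ![12, 6, -4, -3, -2, -1] + x 1 • ![1, 0, -1, 0, 0, 0] +
    x 2 • ![0, -1, 0, 0, 0, 0] + x 3 • ![1, 0, 0, -1, 0, 0]

/-!
The coordinates `E4, E5` of `σ x` are `-2 x₀, -x₀`, so `x` can be read back off `σ x` by an
integral left inverse `ρ`. Hence `σ` is injective, and its image is exactly the set where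
`σ ∘ ρ` is the identity, which is cut out by the two linear equations
`y₀ + y₂ + y₃ + 5 y₅ = 0` and `y₄ = 2 y₅`. A subgroup of `ℤ⁶` defined by linear equations is
saturated, which is primitivity.
-/

lemma sigma17_eq (x : Fin 4 → ℤ) :
    sigma17 x = ![12 * x 0 + x 1 + x 3, 6 * x 0 - x 2, -4 * x 0 - x 1,
      -3 * x 0 - x 3, -2 * x 0, -x 0] := by
  funext i
  fin_cases i <;> simp [sigma17] <;> ring

lemma form6_sigma17 (x y : Fin 4 → ℤ) :
    form6 (sigma17 x) (sigma17 y) = dotProduct x (gram17.mulVec y) := by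
  simp [form6, sigma17_eq, gram17, dotProduct, Matrix.mulVec, Fin.sum_univ_four]
  ring

def retract17 (y : Fin 6 → ℤ) : Fin 4 → ℤ :=
  ![-y 5, 4 * y 5 - y 2, -6 * y 5 - y 1, 3 * y 5 - y 3]

lemma retract17_sigma17 : Function.LeftInverse retract17 sigma17 := by
  intro x
  funext i
  fin_cases i <;> simp [retract17, sigma17_eq]

lemma sigma17_injective : Function.Injective sigma17 :=
  retract17_sigma17.injective

lemma mem_range_sigma17_iff (y : Fin 6 → ℤ) :
    y ∈ Set.range sigma17 ↔ y 0 + y 2 + y 3 + 5 * y 5 = 0 ∧ y 4 - 2 * y 5 = 0 := by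
  constructor
  · rintro ⟨x, rfl⟩
    simp [sigma17_eq]
    ring
  · rintro ⟨h₁, h₂⟩
    refine ⟨retract17 y, funext fun i => ?_⟩
    fin_cases i <;> simp [retract17, sigma17_eq] <;> omega

lemma mem_range_sigma17_of_smul_mem {y : Fin 6 → ℤ} {n : ℤ} (hn : n ≠ 0)
    (h : n • y ∈ Set.range sigma17) : y ∈ Set.range sigma17 := by
  rw [mem_range_sigma17_iff] at h ⊢
  simp only [Pi.smul_apply, smul_eq_mul] at h
  obtain ⟨h₁, h₂⟩ := h
  constructor
  · exact (mul_eq_zero.mp (by linear_combination h₁)).resolve_left hn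
  · exact (mul_eq_zero.mp (by linear_combination h₂)).resolve_left hn

/-- `sigma17` is a primitive embedding of the rank-4 lattice with Gram matrix
`gram17` into `Σ₅`. -/
theorem stmt_17 :
    (∀ x y : Fin 4 → ℤ,
      form6 (sigma17 x) (sigma17 y) = dotProduct x (gram17.mulVec y)) ∧
    Function.Injective sigma17 ∧
    (∀ (y : Fin 6 → ℤ) (n : ℤ), n ≠ 0 →
      n • y ∈ Set.range sigma17 → y ∈ Set.range sigma17) :=
  ⟨form6_sigma17, sigma17_injective, fun _ _ hn => mem_range_sigma17_of_smul_mem hn⟩
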